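/- If formulas A and B are both closed under stuttering, then A U B (A until B) is closed under stuttering. -/

import Mathlib

def State := String → Bool

def StSeq := ℕ → State

def drop (k : ℕ) (s : StSeq) : StSeq := fun n => s (k + n)

def stutter (s : StSeq) (i : ℕ) : StSeq := fun n => if n ≤ i then s n else s (n - 1)

def CUS (F : StSeq → Prop) : Prop := ∀ (s : StSeq) (i : ℕ), F s ↔ F (stutter s i)

def Var (a : String) : StSeq → Prop := fun s => s 0 a = true

def Not' (F : StSeq → Prop) : StSeq → Prop := fun s => ¬ F s

def And' (F G : StSeq → Prop) : StSeq → Prop := fun s => F s ∧ G s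

def Or' (F G : StSeq → Prop) : StSeq → Prop := fun s => F s ∨ G s

def Imp' (F G : StSeq → Prop) : StSeq → Prop := fun s => F s → G s

def Iff' (F G : StSeq → Prop) : StSeq → Prop := fun s => F s ↔ G s

def Next (F : StSeq → Prop) : StSeq → Prop := fun s => F (drop 1 s)

def Always (F : StSeq → Prop) : StSeq → Prop := fun s => ∀ k, F (drop k s)

def Ev (F : StSeq → Prop) : StSeq → Prop := fun s => ∃ k, F (drop k s)

def Until' (F G : StSeq → Prop) : StSeq → Prop :=
  fun s => ∃ k, G (drop k s) ∧ ∀ j < k, F (drop j s)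

def Up (F : StSeq → Prop) : StSeq → Prop := And' (Not' F) (Next F)

def Down (F : StSeq → Prop) : StSeq → Prop := And' F (Next (Not' F))

def AnyEdge (F : StSeq → Prop) : StSeq → Prop := Or' (Up F) (Down F)

/-! Stuttering at `i` reindexes a sequence along the monotone surjection `stutterIndex i` of `ℕ`,
and a suffix of the stuttered sequence is either a stuttering of the corresponding suffix (up to
position `i`) or equal to it (afterwards), so `A` and `B` agree on corresponding suffixes.
`A U B` is invariant under any such reindexing: a `B`-witness is carried to its image, resp. to
its first preimage, and monotonicity keeps the earlier positions before it. -/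

def stutterIndex (i n : ℕ) : ℕ := if n ≤ i then n else n - 1

lemma stutterIndex_monotone (i : ℕ) : Monotone (stutterIndex i) := by
  intro a b hab
  unfold stutterIndex
  split_ifs <;> omega

lemma stutterIndex_surjective (i : ℕ) : Function.Surjective (stutterIndex i) := by
  intro k
  refine ⟨if k ≤ i then k else k + 1, ?_⟩
  unfold stutterIndex
  split_ifs <;> omega

lemma drop_stutter_of_le {k i : ℕ} (h : k ≤ i) (s : StSeq) :
    drop k (stutter s i) = stutter (drop k s) (i - k) := by
  funext n
  simp only [drop, stutter]
  split_ifs <;> first | rfl | omega | (congr 1; omega)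

lemma drop_stutter_of_lt {k i : ℕ} (h : i < k) (s : StSeq) :
    drop k (stutter s i) = drop (k - 1) s := by
  funext n
  simp only [drop, stutter]
  rw [if_neg (by omega)]
  congr 1
  omega

lemma CUS.drop_stutter_iff {F : StSeq → Prop} (hF : CUS F) (s : StSeq) (i n : ℕ) :
    F (drop n (stutter s i)) ↔ F (drop (stutterIndex i n) s) := by
  unfold stutterIndex
  split_ifs with h
  · rw [drop_stutter_of_le h, ← hF]
  · rw [drop_stutter_of_lt (not_le.mp h)]

lemma until_iff_of_monotone_surjective {A B : StSeq → Prop} {s t : StSeq} {φ : ℕ → ℕ}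
    (hmono : Monotone φ) (hsurj : Function.Surjective φ)
    (hA : ∀ n, A (drop n t) ↔ A (drop (φ n) s)) (hB : ∀ n, B (drop n t) ↔ B (drop (φ n) s)) :
    Until' A B t ↔ Until' A B s := by
  constructor
  · rintro ⟨k, hBk, hAbefore⟩
    refine ⟨φ k, (hB k).mp hBk, fun j hj => ?_⟩
    obtain ⟨n, rfl⟩ := hsurj j
    have hnk : n < k := lt_of_not_ge fun hkn => hj.not_ge (hmono hkn)
    exact (hA n).mp (hAbefore n hnk)
  · rintro ⟨k, hBk, hAbefore⟩
    have hpre : ∃ n, φ n = k := hsurj k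
    have hn : φ (Nat.find hpre) = k := Nat.find_spec hpre
    refine ⟨Nat.find hpre, (hB _).mpr (hn.symm ▸ hBk), fun j hj => (hA j).mpr (hAbefore _ ?_)⟩
    exact lt_of_le_of_ne (hn ▸ hmono hj.le) (Nat.find_min hpre hj)

theorem cus_until (A B : StSeq → Prop) (hA : CUS A) (hB : CUS B) : CUS (Until' A B) := by
  intro s i
  exact (until_iff_of_monotone_surjective (stutterIndex_monotone i) (stutterIndex_surjective i)
    (hA.drop_stutter_iff s i) (hB.drop_stutter_iff s i)).symm
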